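/- Let ψ ∈ Ω∞ and let κ ∈ 𝒦 have dominated growth with respect to ψ (κ ∈ D(ψ)). Let Λ ⊆ BL(ℝ₊) be a set of Banach limits with the Cesàro limit property. Then there exists a constant c with 0 < c < 1 such that for every x ∈ M(ψ): c · ρ₁(x) ≤ sup{ f_{L,κ}(x) : L ∈ Λ } ≤ ρ₁(x), where ρ₁(x) := limsup_{t→∞} φ(x)(t). -/

import Mathlib

open MeasureTheory Filter Set

noncomputable section

/-- `f` is bounded and continuous on `[0,∞)`, i.e. (the restriction of) `f`
belongs to `C_b([0,∞))`. -/
def IsCb (f : ℝ → ℝ) : Prop :=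
  ContinuousOn f (Ici 0) ∧ ∃ M : ℝ, ∀ t ∈ Ici (0:ℝ), |f t| ≤ M

/-- Bounded real sequences, i.e. elements of `ℓ∞(ℕ)`. -/
def IsBddSeq (a : ℕ → ℝ) : Prop := ∃ M : ℝ, ∀ n, |a n| ≤ M

/-- A Banach limit on `C_b([0,∞))`: a positive linear translation-invariant
functional with `L(1) = 1`.  (The underlying map is defined on all of `ℝ → ℝ`;
the axioms only refer to its values on bounded continuous functions on `[0,∞)`.) -/
structure BanachLimitR where
  toFun : (ℝ → ℝ) → ℝ
  map_add : ∀ f g : ℝ → ℝ, IsCb f → IsCb g →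
    toFun (fun t => f t + g t) = toFun f + toFun g
  map_smul : ∀ (c : ℝ) (f : ℝ → ℝ), IsCb f → toFun (fun t => c * f t) = c * toFun f
  pos : ∀ f : ℝ → ℝ, IsCb f → (∀ t ∈ Ici (0:ℝ), 0 ≤ f t) → 0 ≤ toFun f
  map_one : toFun (fun _ => 1) = 1
  shift_inv : ∀ f : ℝ → ℝ, IsCb f → ∀ s : ℝ, 0 ≤ s → toFun (fun t => f (t + s)) = toFun f

/-- A Banach limit on `ℓ∞(ℕ)`: a positive linear shift-invariant functional
with `L'(1) = 1`. -/
structure BanachLimitN where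
  toFun : (ℕ → ℝ) → ℝ
  map_add : ∀ a b : ℕ → ℝ, IsBddSeq a → IsBddSeq b →
    toFun (fun n => a n + b n) = toFun a + toFun b
  map_smul : ∀ (c : ℝ) (a : ℕ → ℝ), IsBddSeq a → toFun (fun n => c * a n) = c * toFun a
  pos : ∀ a : ℕ → ℝ, IsBddSeq a → (∀ n, 0 ≤ a n) → 0 ≤ toFun a
  map_one : toFun (fun _ => 1) = 1
  shift_inv : ∀ a : ℕ → ℝ, IsBddSeq a → toFun (fun n => a (n + 1)) = toFun a

/-- An element of `SC_b^*([0,∞))`: a positive linear functional on `C_b([0,∞))`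
with `γ(1) = 1` vanishing on `C₀([0,∞))`. -/
structure SCbStar where
  toFun : (ℝ → ℝ) → ℝ
  map_add : ∀ f g : ℝ → ℝ, IsCb f → IsCb g →
    toFun (fun t => f t + g t) = toFun f + toFun g
  map_smul : ∀ (c : ℝ) (f : ℝ → ℝ), IsCb f → toFun (fun t => c * f t) = c * toFun f
  pos : ∀ f : ℝ → ℝ, IsCb f → (∀ t ∈ Ici (0:ℝ), 0 ≤ f t) → 0 ≤ toFun f
  map_one : toFun (fun _ => 1) = 1
  vanish : ∀ f : ℝ → ℝ, IsCb f → Tendsto f atTop (nhds 0) → toFun f = 0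

/-- A positive linear functional on `C_b([0,∞))`. -/
structure PosLinFunc where
  toFun : (ℝ → ℝ) → ℝ
  map_add : ∀ f g : ℝ → ℝ, IsCb f → IsCb g →
    toFun (fun t => f t + g t) = toFun f + toFun g
  map_smul : ∀ (c : ℝ) (f : ℝ → ℝ), IsCb f → toFun (fun t => c * f t) = c * toFun f
  pos : ∀ f : ℝ → ℝ, IsCb f → (∀ t ∈ Ici (0:ℝ), 0 ≤ f t) → 0 ≤ toFun f

/-- `ψ ∈ Ω_∞`: concave on `[0,∞)`, nonnegative, `ψ(t) → 0` as `t → 0⁺` and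
`ψ(t) → ∞` as `t → ∞`. -/
def OmegaInf (ψ : ℝ → ℝ) : Prop :=
  ConcaveOn ℝ (Ici 0) ψ ∧ (∀ t ∈ Ici (0:ℝ), 0 ≤ ψ t) ∧
    Tendsto ψ (nhdsWithin 0 (Ioi 0)) (nhds 0) ∧ Tendsto ψ atTop atTop

/-- The decreasing rearrangement `x*` of a measurable function `x` on `[0,∞)`. -/
def decRearr (x : ℝ → ℝ) (t : ℝ) : ℝ :=
  sInf {s : ℝ | 0 ≤ s ∧ volume {u : ℝ | 0 ≤ u ∧ s < |x u|} ≤ ENNReal.ofReal t}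

/-- The weighted mean function `φ(x)(t) = (1/ψ(t)) ∫₀ᵗ x*(s) ds`. -/
def phiW (ψ x : ℝ → ℝ) (t : ℝ) : ℝ := (∫ s in (0:ℝ)..t, decRearr x s) / ψ t

/-- Membership in the Marcinkiewicz space `M(ψ)`. -/
def MemM (ψ x : ℝ → ℝ) : Prop :=
  Measurable x ∧ ∃ M : ℝ, ∀ t > (0:ℝ), phiW ψ x t ≤ M

/-- Membership in the positive cone `M₊(ψ)`. -/
def MemMplus (ψ x : ℝ → ℝ) : Prop := MemM ψ x ∧ ∀ t ∈ Ici (0:ℝ), 0 ≤ x t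

/-- The Marcinkiewicz norm `‖x‖_{M(ψ)} = sup_{t>0} φ(x)(t)`. -/
def MNorm (ψ x : ℝ → ℝ) : ℝ := ⨆ t > (0:ℝ), phiW ψ x t

/-- `κ ∈ 𝒦`: strictly increasing, invertible (as a map of `[0,∞)` onto itself),
differentiable, unbounded, with `κ(0) = 0`. -/
def MemK (κ : ℝ → ℝ) : Prop :=
  StrictMonoOn κ (Ici 0) ∧ κ 0 = 0 ∧ MapsTo κ (Ici 0) (Ici 0) ∧
    SurjOn κ (Ici 0) (Ici 0) ∧ DifferentiableOn ℝ κ (Ici 0) ∧ Tendsto κ atTop atTop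

/-- `f_{L,κ}(x) = L(φ_κ(x))` for a Banach limit `L` on `C_b([0,∞))`; the function
`φ_κ(x)`, bounded and continuous on `(0,∞)`, is fed to `L` as `t ↦ φ_κ(x)(max t 1)`. -/
def fL (L : BanachLimitR) (ψ κ x : ℝ → ℝ) : ℝ :=
  L.toFun fun t => phiW ψ x (κ (max t 1))

/-- `f_{L',κ}(x) = L'({φ(x)(κ(n))}ₙ)` for a Banach limit `L'` on `ℓ∞(ℕ)`. -/
def fLN (L' : BanachLimitN) (ψ κ x : ℝ → ℝ) : ℝ :=
  L'.toFun fun n => phiW ψ x (κ n)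

/-- `κ` has restricted growth with respect to `ψ` (`κ ∈ R(ψ)`): the sequence
`ψ(κ(n))/ψ(κ(n+1))` is almost convergent to `1`. -/
def RestrictedGrowth (ψ κ : ℝ → ℝ) : Prop :=
  ∀ L' : BanachLimitN, L'.toFun (fun n => ψ (κ n) / ψ (κ ((n:ℝ) + 1))) = 1

/-- `κ` has dominated growth with respect to `ψ` (`κ ∈ D(ψ)`):
`(ψ∘κ)'(t)/(ψ∘κ)(t) < C/t` for some `C > 0` and all `t > 0`. -/
def DominatedGrowth (ψ κ : ℝ → ℝ) : Prop :=
  (∀ t > (0:ℝ), DifferentiableAt ℝ (fun u => ψ (κ u)) t) ∧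
    ∃ C > (0:ℝ), ∀ t > (0:ℝ), deriv (fun u => ψ (κ u)) t / ψ (κ t) < C / t

/-- `κ` is of exponential increase: `κ(t + C) > 2κ(t)` for some `C > 0` and all `t > 0`. -/
def ExpIncrease (κ : ℝ → ℝ) : Prop := ∃ C > (0:ℝ), ∀ t > (0:ℝ), 2 * κ t < κ (t + C)

/-- The piecewise linear extension map `p : ℓ∞(ℕ) → C_b([0,∞))`. -/
def plExt (a : ℕ → ℝ) (t : ℝ) : ℝ :=
  a ⌊t⌋₊ + (a (⌊t⌋₊ + 1) - a ⌊t⌋₊) * (t - (⌊t⌋₊ : ℝ))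

/-- The Cesàro mean `C(g)(μ) = (1/μ) ∫₀^μ g(s) ds` (with `C(g)(0) := g(0)`). -/
def cesaro (g : ℝ → ℝ) (μ : ℝ) : ℝ :=
  if μ = 0 then g 0 else (∫ s in (0:ℝ)..μ, g s) / μ

/-- `M_k(g)(λ) = (1/k(λ)) ∫₀^λ g(s) k'(s) ds` (with `M_k(g)(0) := g(0)`). -/
def MkFun (k g : ℝ → ℝ) (l : ℝ) : ℝ :=
  if l = 0 then g 0 else (∫ s in (0:ℝ)..l, g s * deriv k s) / k l

/-- The Connes-Dixmier functional `τ_{γ,k}(x) = γ(M_k(φ(x)))`; the function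
`M_k(φ(x))`, bounded and continuous on `(0,∞)`, is fed to `γ` as `t ↦ M_k(φ(x))(max t 1)`. -/
def tauCD (γ : SCbStar) (ψ k x : ℝ → ℝ) : ℝ :=
  γ.toFun fun t => MkFun k (phiW ψ x) (max t 1)

/-- A set `Λ` of Banach limits has the Cesàro limit property if for each
`g ∈ C_b([0,∞))` both `liminf C(g)` and `limsup C(g)` are attained as values `L(g)`, `L ∈ Λ`. -/
def CesaroLimitProp (Λ : Set BanachLimitR) : Prop :=
  ∀ g : ℝ → ℝ, IsCb g →
    (∃ L ∈ Λ, L.toFun g = liminf (cesaro g) atTop) ∧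
    (∃ L ∈ Λ, L.toFun g = limsup (cesaro g) atTop)

/-- Dilation invariance of an element of `SC_b^*([0,∞))`. -/
def DilationInvariant (ω : SCbStar) : Prop :=
  ∀ g : ℝ → ℝ, IsCb g → ∀ a : ℝ, 0 < a → ω.toFun (fun t => g (a * t)) = ω.toFun g

/-!
Every Banach limit of `φ_κ(x)` lies below `limsup φ_κ(x) ≤ ρ₁(x)`, which is the upper bound.
For the lower bound, dominated growth gives `ψ(κ(v)) ≤ 2^C ψ(κ(u))` for `u ≤ v ≤ 2u`, and
`t ↦ ∫₀ᵗ x*` increases, so `φ(x)(κ(·)) ≥ φ(x)(κ(u)) / 2^C` on `[u, 2u]` and the Cesàro mean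
of `φ_κ(x)` at `2u` is at least `φ(x)(κ(u)) / (2 · 2^C)`. Taking `κ(u)` where `φ(x)` is close
to `ρ₁(x)` gives `limsup C(φ_κ(x)) ≥ ρ₁(x) / (2 · 2^C)`, and the Cesàro limit property realises
this limsup as some `f_{L,κ}(x)` with `L ∈ Λ`.
-/

theorem OmegaInf.pos {ψ : ℝ → ℝ} (hψ : OmegaInf ψ) {t : ℝ} (ht : 0 < t) : 0 < ψ t := by
  obtain ⟨hconc, hnn, -, hinf⟩ := hψ
  obtain ⟨T, hψT, htT⟩ := ((hinf.eventually_gt_atTop 0).and (eventually_gt_atTop t)).exists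
  have hslope := hconc.slope_anti_adjacent (mem_Ici.2 le_rfl) (mem_Ici.2 (ht.trans htT).le) ht htT
  by_contra! hψt
  rw [le_antisymm hψt (hnn t ht.le)] at hslope
  have hleft : 0 < (ψ T - 0) / (T - t) := div_pos (by linarith) (by linarith)
  have hright : (0 - ψ 0) / (t - 0) ≤ 0 :=
    div_nonpos_of_nonpos_of_nonneg (by linarith [hnn 0 (mem_Ici.2 le_rfl)]) (by linarith)
  linarith

theorem OmegaInf.continuousOn {ψ : ℝ → ℝ} (hψ : OmegaInf ψ) : ContinuousOn ψ (Ioi 0) := by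
  simpa using hψ.1.continuousOn_interior

namespace MemK

variable {κ : ℝ → ℝ} (hκ : MemK κ)
include hκ

theorem pos {t : ℝ} (ht : 0 < t) : 0 < κ t := by
  simpa [hκ.2.1] using hκ.1 (mem_Ici.2 le_rfl) (mem_Ici.2 ht.le) ht

theorem continuousOn : ContinuousOn κ (Ici 0) :=
  hκ.2.2.2.2.1.continuousOn

theorem tendsto_comp_max_one : Tendsto (fun t => κ (max t 1)) atTop atTop :=
  hκ.2.2.2.2.2.comp (tendsto_atTop_mono (fun t => le_max_left t 1) tendsto_id)

theorem frequently_comp {P : ℝ → Prop} (hP : ∃ᶠ t in atTop, P t) :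
    ∃ᶠ u in atTop, P (κ u) := by
  refine frequently_atTop.2 fun N => ?_
  obtain ⟨t, htN, hPt⟩ := frequently_atTop.1 hP (κ (max N 0))
  obtain ⟨u, hu, rfl⟩ := hκ.2.2.2.1 (mem_Ici.2 ((hκ.2.2.1 (le_max_right N 0)).trans htN))
  have hNu : max N 0 ≤ u := (hκ.1.le_iff_le (mem_Ici.2 (le_max_right N 0)) hu).1 htN
  exact ⟨u, (le_max_left N 0).trans hNu, hPt⟩

end MemK

theorem le_mul_div_rpow_of_deriv_div_le {h : ℝ → ℝ} {C u v : ℝ} (hpos : ∀ t > 0, 0 < h t)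
    (hdiff : ∀ t > 0, DifferentiableAt ℝ h t) (hder : ∀ t > 0, deriv h t / h t ≤ C / t)
    (hu : 0 < u) (huv : u ≤ v) : h v ≤ h u * (v / u) ^ C := by
  have hv : 0 < v := hu.trans_le huv
  have hanti : AntitoneOn (fun s => Real.log (h s) - C * Real.log s) (Ioi 0) := by
    refine antitoneOn_of_hasDerivWithinAt_nonpos (convex_Ioi 0)
      (f' := fun s => deriv h s / h s - C * s⁻¹) ?_ ?_ ?_
    · exact fun s hs => (((hdiff s hs).continuousAt.log (hpos s hs).ne').sub
        (continuousAt_const.mul (Real.continuousAt_log (ne_of_gt hs)))).continuousWithinAt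
    · rw [interior_Ioi]
      exact fun s hs => (((hdiff s hs).hasDerivAt.log (hpos s hs).ne').sub
        ((Real.hasDerivAt_log (ne_of_gt hs)).const_mul C)).hasDerivWithinAt
    · rw [interior_Ioi]
      intro s hs
      simpa [div_eq_mul_inv C s] using hder s hs
  have hlog := hanti (mem_Ioi.2 hu) (mem_Ioi.2 hv) huv
  have hpow : 0 < (v / u) ^ C := Real.rpow_pos_of_pos (div_pos hv hu) C
  rw [← Real.log_le_log_iff (hpos v hv) (mul_pos (hpos u hu) hpow),
    Real.log_mul (hpos u hu).ne' hpow.ne', Real.log_rpow (div_pos hv hu),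
    Real.log_div hv.ne' hu.ne']
  linarith

section PrimitiveOfAntitone

variable {f : ℝ → ℝ} (hf : AntitoneOn f (Ioi 0))
include hf

theorem AntitoneOn.intervalIntegrable_of_pos {a b : ℝ} (ha : 0 < a) (hb : 0 < b) :
    IntervalIntegrable f volume a b :=
  (hf.mono fun _ hs => (lt_min ha hb).trans_le hs.1).intervalIntegrable

/-- The second alternative is the junk value of `∫₀ᵗ f` when `f` is not integrable near `0`. -/
theorem AntitoneOn.intervalIntegrable_or_integral_eq_zero :
    (∀ t > 0, IntervalIntegrable f volume 0 t) ∨ ∀ t > 0, ∫ s in (0:ℝ)..t, f s = 0 := by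
  by_cases h1 : IntervalIntegrable f volume 0 1
  · exact .inl fun t ht => h1.trans (hf.intervalIntegrable_of_pos one_pos ht)
  · exact .inr fun t ht => intervalIntegral.integral_undef fun h =>
      h1 (h.trans (hf.intervalIntegrable_of_pos ht one_pos))

theorem AntitoneOn.monotoneOn_integral (hf₀ : ∀ t, 0 ≤ f t) :
    MonotoneOn (fun t => ∫ s in (0:ℝ)..t, f s) (Ioi 0) := by
  intro a ha b hb hab
  dsimp only
  rcases hf.intervalIntegrable_or_integral_eq_zero with hint | hzero
  · rw [← intervalIntegral.integral_add_adjacent_intervals (hint a ha)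
      (hf.intervalIntegrable_of_pos ha hb)]
    exact le_add_of_nonneg_right (intervalIntegral.integral_nonneg hab fun s _ => hf₀ s)
  · simp only [hzero a ha, hzero b hb, le_refl]

theorem AntitoneOn.continuousOn_integral :
    ContinuousOn (fun t => ∫ s in (0:ℝ)..t, f s) (Ioi 0) := by
  rcases hf.intervalIntegrable_or_integral_eq_zero with hint | hzero
  · intro t ht
    have hcont := intervalIntegral.continuousOn_primitive_interval'
      (hint (t + 1) (by linarith [mem_Ioi.1 ht])) left_mem_uIcc
    rw [uIcc_of_le (by linarith [mem_Ioi.1 ht])] at hcont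
    exact (hcont.continuousAt (Icc_mem_nhds ht (by linarith))).continuousWithinAt
  · exact continuousOn_const.congr fun t ht => hzero t ht

end PrimitiveOfAntitone

theorem decRearr_nonneg (x : ℝ → ℝ) (t : ℝ) : 0 ≤ decRearr x t :=
  Real.sInf_nonneg fun _ hs => hs.1

theorem antitoneOn_decRearr {x : ℝ → ℝ} (hx : Measurable x) :
    AntitoneOn (decRearr x) (Ioi 0) := by
  set E : ℝ → Set ℝ := fun s => {u | 0 ≤ u ∧ s < |x u|}
  by_cases hfin : ∃ s, volume (E s) ≠ ⊤
  · have hE : Tendsto (volume ∘ E) atTop (nhds 0) := by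
      have hmeas : ∀ s, MeasurableSet (E s) := fun s =>
        measurableSet_Ici.inter (measurableSet_lt measurable_const hx.abs)
      have hanti : Antitone E := fun s s' hss' u hu => ⟨hu.1, hss'.trans_lt hu.2⟩
      have hempty : (⋂ s, E s) = ∅ := eq_empty_of_forall_notMem fun u hu =>
        (lt_irrefl _) (mem_iInter.1 hu |x u|).2
      simpa [hempty] using tendsto_measure_iInter_atTop (fun s => (hmeas s).nullMeasurableSet)
        hanti hfin
    intro a ha b _ hab
    obtain ⟨s, hsa, hs⟩ := ((hE.eventually (gt_mem_nhds (ENNReal.ofReal_pos.2 ha))).and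
      (eventually_ge_atTop 0)).exists
    exact csInf_le_csInf ⟨0, fun _ hr => hr.1⟩ ⟨s, hs, hsa.le⟩
      fun r hr => ⟨hr.1, hr.2.trans (ENNReal.ofReal_le_ofReal hab)⟩
  · push Not at hfin
    have hzero : ∀ t, decRearr x t = 0 := fun t => by
      have hempty : {s : ℝ | 0 ≤ s ∧ volume (E s) ≤ ENNReal.ofReal t} = ∅ :=
        eq_empty_of_forall_notMem fun s hs => ENNReal.ofReal_ne_top (top_le_iff.1 (hfin s ▸ hs.2))
      exact (congrArg sInf hempty).trans Real.sInf_empty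
    intro a _ b _ _
    rw [hzero, hzero]

theorem phiW_nonneg {ψ : ℝ → ℝ} (hψ : OmegaInf ψ) (x : ℝ → ℝ) {t : ℝ} (ht : 0 ≤ t) :
    0 ≤ phiW ψ x t :=
  div_nonneg (intervalIntegral.integral_nonneg ht fun s _ => decRearr_nonneg x s) (hψ.2.1 t ht)

theorem isCoboundedUnder_le_phiW {ψ : ℝ → ℝ} (hψ : OmegaInf ψ) (x : ℝ → ℝ) :
    IsCoboundedUnder (· ≤ ·) atTop (phiW ψ x) :=
  (isBoundedUnder_of_eventually_ge ((eventually_ge_atTop 0).mono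
    fun _ ht => phiW_nonneg hψ x ht)).isCoboundedUnder_le

section Marcinkiewicz

variable {ψ x : ℝ → ℝ}

theorem continuousOn_phiW (hψ : OmegaInf ψ) (hx : Measurable x) :
    ContinuousOn (phiW ψ x) (Ioi 0) :=
  (antitoneOn_decRearr hx).continuousOn_integral.div hψ.continuousOn fun _ ht => (hψ.pos ht).ne'

theorem phiW_div_le_phiW (hψ : OmegaInf ψ) (hx : Measurable x) {s t K : ℝ} (hs : 0 < s)
    (hst : s ≤ t) (hK : ψ t ≤ ψ s * K) : phiW ψ x s / K ≤ phiW ψ x t := by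
  have hF := (antitoneOn_decRearr hx).monotoneOn_integral (decRearr_nonneg x)
    (mem_Ioi.2 hs) (mem_Ioi.2 (hs.trans_le hst)) hst
  rw [phiW, phiW, div_div]
  exact div_le_div₀ (intervalIntegral.integral_nonneg (hs.le.trans hst)
    fun r _ => decRearr_nonneg x r) hF (hψ.pos (hs.trans_le hst)) hK

theorem MemM.isBoundedUnder_le (hx : MemM ψ x) :
    IsBoundedUnder (· ≤ ·) atTop (phiW ψ x) :=
  isBoundedUnder_of_eventually_le ((eventually_gt_atTop 0).mono hx.2.choose_spec)

theorem isCb_phiW_comp {κ : ℝ → ℝ} (hψ : OmegaInf ψ) (hκ : MemK κ) (hx : MemM ψ x) :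
    IsCb fun t => phiW ψ x (κ (max t 1)) := by
  have hmax : ∀ t : ℝ, 1 ≤ max t 1 := fun t => le_max_right t 1
  obtain ⟨M, hM⟩ := hx.2
  refine ⟨(continuousOn_phiW hψ hx.1).comp (hκ.continuousOn.comp
      (continuous_id.max continuous_const).continuousOn fun t _ => zero_le_one.trans (hmax t))
      fun t _ => hκ.pos (one_pos.trans_le (hmax t)), M, fun t _ => ?_⟩
  have hκt := hκ.pos (one_pos.trans_le (hmax t))
  exact abs_le.2 ⟨by linarith [hM _ hκt, phiW_nonneg hψ x hκt.le], hM _ hκt⟩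

theorem phiW_comp_div_le_of_mem_Icc {κ : ℝ → ℝ} (hψ : OmegaInf ψ) (hκ : MemK κ)
    (hx : Measurable x) {C : ℝ} (hC : 0 ≤ C)
    (hdiff : ∀ t > 0, DifferentiableAt ℝ (fun u => ψ (κ u)) t)
    (hder : ∀ t > 0, deriv (fun u => ψ (κ u)) t / ψ (κ t) < C / t)
    {u v : ℝ} (hu : 0 < u) (hv : v ∈ Icc u (2 * u)) :
    phiW ψ x (κ u) / 2 ^ C ≤ phiW ψ x (κ v) := by
  have hgrowth := le_mul_div_rpow_of_deriv_div_le (fun t ht => hψ.pos (hκ.pos ht)) hdiff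
    (fun t ht => (hder t ht).le) hu hv.1
  have hratio : (v / u) ^ C ≤ 2 ^ C :=
    Real.rpow_le_rpow (div_pos (hu.trans_le hv.1) hu).le ((div_le_iff₀ hu).2 hv.2) hC
  exact phiW_div_le_phiW hψ hx (hκ.pos hu) (hκ.1.monotoneOn (mem_Ici.2 hu.le)
    (mem_Ici.2 (hu.le.trans hv.1)) hv.1)
    (hgrowth.trans (mul_le_mul_of_nonneg_left hratio (hψ.pos (hκ.pos hu)).le))

end Marcinkiewicz

theorem isCb_const (c : ℝ) : IsCb fun _ => c :=
  ⟨continuousOn_const, |c|, fun _ _ => le_rfl⟩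

theorem IsCb.sub {f g : ℝ → ℝ} (hf : IsCb f) (hg : IsCb g) : IsCb fun t => f t - g t := by
  obtain ⟨⟨hfc, M, hM⟩, hgc, N, hN⟩ := And.intro hf hg
  exact ⟨hfc.sub hgc, M + N, fun t ht => (abs_sub _ _).trans (add_le_add (hM t ht) (hN t ht))⟩

theorem IsCb.comp_add_const {f : ℝ → ℝ} (hf : IsCb f) {s : ℝ} (hs : 0 ≤ s) :
    IsCb fun t => f (t + s) := by
  have hmaps : MapsTo (fun t => t + s) (Ici 0) (Ici 0) := fun t ht => add_nonneg ht hs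
  obtain ⟨hfc, M, hM⟩ := hf
  exact ⟨hfc.comp (continuous_add_const s).continuousOn hmaps, M, fun t ht => hM _ (hmaps ht)⟩

theorem IsCb.isBoundedUnder_le_cesaro {g : ℝ → ℝ} (hg : IsCb g) :
    IsBoundedUnder (· ≤ ·) atTop (cesaro g) := by
  obtain ⟨-, M, hM⟩ := hg
  refine isBoundedUnder_of_eventually_le (a := M) ((eventually_gt_atTop 0).mono fun μ hμ => ?_)
  rw [cesaro, if_neg hμ.ne', div_le_iff₀ hμ]
  have hbound := intervalIntegral.norm_integral_le_of_norm_le_const (a := 0) (b := μ)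
    fun s hs => (Real.norm_eq_abs (g s)).trans_le
      (hM s (mem_Ici.2 (le_of_lt (by simpa [hμ.le] using hs.1))))
  rw [sub_zero, abs_of_pos hμ, Real.norm_eq_abs] at hbound
  exact (le_abs_self _).trans hbound

theorem half_le_cesaro {g : ℝ → ℝ} {u m : ℝ} (hg : ContinuousOn g (Ici 0))
    (hg₀ : ∀ t ∈ Ici (0:ℝ), 0 ≤ g t) (hu : 0 < u) (hm : ∀ s ∈ Icc u (2 * u), m ≤ g s) :
    m / 2 ≤ cesaro g (2 * u) := by
  have hint : ∀ a b : ℝ, 0 ≤ a → 0 ≤ b → IntervalIntegrable g volume a b := fun a b ha hb =>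
    (hg.mono fun s hs => (le_min ha hb).trans hs.1).intervalIntegrable
  have hhead : 0 ≤ ∫ s in (0:ℝ)..u, g s :=
    intervalIntegral.integral_nonneg hu.le fun s hs => hg₀ s hs.1
  have htail : (2 * u - u) * m ≤ ∫ s in u..2 * u, g s := by
    simpa using intervalIntegral.integral_mono_on (by linarith) intervalIntegrable_const
      (hint u (2 * u) hu.le (by linarith)) hm
  rw [cesaro, if_neg (by positivity), ← intervalIntegral.integral_add_adjacent_intervals
    (hint 0 u le_rfl hu.le) (hint u (2 * u) hu.le (by linarith)), le_div_iff₀ (by positivity)]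
  linarith

namespace BanachLimitR

variable (L : BanachLimitR)

theorem toFun_const (c : ℝ) : L.toFun (fun _ => c) = c := by
  simpa [L.map_one] using L.map_smul c (fun _ => 1) (isCb_const 1)

theorem toFun_mono {f g : ℝ → ℝ} (hf : IsCb f) (hg : IsCb g)
    (hfg : ∀ t ∈ Ici (0:ℝ), f t ≤ g t) : L.toFun f ≤ L.toFun g := by
  have hsplit := L.map_add f (fun t => g t - f t) hf (hg.sub hf)
  simp only [add_sub_cancel] at hsplit
  rw [hsplit]
  linarith [L.pos _ (hg.sub hf) fun t ht => sub_nonneg.2 (hfg t ht)]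

theorem toFun_le_of_eventually_le {g : ℝ → ℝ} {b : ℝ} (hg : IsCb g)
    (hgb : ∀ᶠ t in atTop, g t ≤ b) : L.toFun g ≤ b := by
  obtain ⟨s, hs⟩ := eventually_atTop.1 hgb
  rw [← L.shift_inv g hg (max s 0) (le_max_right s 0), ← L.toFun_const b]
  exact L.toFun_mono (hg.comp_add_const (le_max_right s 0)) (isCb_const b)
    fun t ht => hs _ (by linarith [le_max_left s 0, mem_Ici.1 ht])

end BanachLimitR

section SeminormBounds

variable {ψ κ x : ℝ → ℝ}

theorem fL_le_limsup_phiW (L : BanachLimitR) (hψ : OmegaInf ψ) (hκ : MemK κ) (hx : MemM ψ x) :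
    fL L ψ κ x ≤ limsup (phiW ψ x) atTop := by
  refine le_of_forall_gt_imp_ge_of_dense fun b hb =>
    L.toFun_le_of_eventually_le (isCb_phiW_comp hψ hκ hx) ?_
  exact (hκ.tendsto_comp_max_one.eventually
    (eventually_lt_of_limsup_lt hb hx.isBoundedUnder_le)).mono fun _ ht => ht.le

theorem limsup_phiW_div_le_limsup_cesaro (hψ : OmegaInf ψ) (hκ : MemK κ) (hx : MemM ψ x)
    {C : ℝ} (hC : 0 ≤ C) (hdiff : ∀ t > 0, DifferentiableAt ℝ (fun u => ψ (κ u)) t)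
    (hder : ∀ t > 0, deriv (fun u => ψ (κ u)) t / ψ (κ t) < C / t) :
    limsup (phiW ψ x) atTop / (2 * 2 ^ C) ≤
      limsup (cesaro fun t => phiW ψ x (κ (max t 1))) atTop := by
  have hg := isCb_phiW_comp hψ hκ hx
  refine le_of_forall_lt_imp_le_of_dense fun b hb =>
    le_limsup_of_frequently_le (frequently_atTop.2 fun N => ?_) hg.isBoundedUnder_le_cesaro
  rw [lt_div_iff₀ (by positivity)] at hb
  obtain ⟨u, hu, hbu⟩ := frequently_atTop.1 (hκ.frequently_comp
    (frequently_lt_of_lt_limsup (isCoboundedUnder_le_phiW hψ x) hb)) (max N 1)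
  have hu₁ : 1 ≤ u := (le_max_right N 1).trans hu
  refine ⟨2 * u, by linarith [le_max_left N 1], ?_⟩
  have hlarge : ∀ v ∈ Icc u (2 * u), 2 * b ≤ phiW ψ x (κ (max v 1)) := by
    intro v hv
    have hbound := phiW_comp_div_le_of_mem_Icc hψ hκ hx.1 hC hdiff hder (one_pos.trans_le hu₁) hv
    rw [div_le_iff₀ (Real.rpow_pos_of_pos two_pos C)] at hbound
    rw [max_eq_left (hu₁.trans hv.1)]
    exact le_of_mul_le_mul_right (by linarith) (Real.rpow_pos_of_pos two_pos C)
  linarith [half_le_cesaro hg.1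
    (fun t _ => phiW_nonneg hψ x (hκ.pos (one_pos.trans_le (le_max_right t 1))).le)
    (one_pos.trans_le hu₁) hlarge]

end SeminormBounds

/-- for `κ ∈ D(ψ)` and a set `Λ` of Banach limits with the Cesàro
limit property, the seminorm `sup_{L∈Λ} f_{L,κ}(x)` is equivalent to the Riesz
seminorm `ρ₁(x) = limsup φ(x)`. -/
theorem riesz_seminorm_equivalence (ψ κ : ℝ → ℝ) (hψ : OmegaInf ψ) (hκ : MemK κ)
    (hD : DominatedGrowth ψ κ) (Λ : Set BanachLimitR) (hΛ : CesaroLimitProp Λ) :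
    ∃ c : ℝ, 0 < c ∧ c < 1 ∧ ∀ x : ℝ → ℝ, MemM ψ x →
      c * limsup (phiW ψ x) atTop ≤ sSup {r : ℝ | ∃ L ∈ Λ, r = fL L ψ κ x} ∧
      sSup {r : ℝ | ∃ L ∈ Λ, r = fL L ψ κ x} ≤ limsup (phiW ψ x) atTop := by
  obtain ⟨hdiff, C, hC, hder⟩ := hD
  refine ⟨1 / (2 * 2 ^ C), by positivity, ?_, fun x hx => ?_⟩
  · rw [div_lt_one (by positivity)]
    linarith [Real.one_le_rpow one_le_two hC.le]
  set S := {r : ℝ | ∃ L ∈ Λ, r = fL L ψ κ x}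
  have hupper : ∀ r ∈ S, r ≤ limsup (phiW ψ x) atTop := by
    rintro r ⟨L, -, rfl⟩
    exact fL_le_limsup_phiW L hψ hκ hx
  obtain ⟨L₀, hL₀, hL₀_eq⟩ := (hΛ _ (isCb_phiW_comp hψ hκ hx)).2
  have hmem : fL L₀ ψ κ x ∈ S := ⟨L₀, hL₀, rfl⟩
  refine ⟨?_, csSup_le ⟨_, hmem⟩ hupper⟩
  calc 1 / (2 * 2 ^ C) * limsup (phiW ψ x) atTop
      = limsup (phiW ψ x) atTop / (2 * 2 ^ C) := one_div_mul_eq_div _ _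
    _ ≤ limsup (cesaro fun t => phiW ψ x (κ (max t 1))) atTop :=
      limsup_phiW_div_le_limsup_cesaro hψ hκ hx hC.le hdiff hder
    _ = fL L₀ ψ κ x := hL₀_eq.symm
    _ ≤ sSup S := le_csSup ⟨_, hupper⟩ hmem
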